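/- arXiv:1907.08300 — 3 statements merged into one kernel-verified Lean document; each statement's English description precedes it below -/
import Mathlib

section
/- With T : L²(A) → L²(Ω, ℓ²(Λ⊥)) the fiberization map T[f](ω) = {f̂(ω+s)}_{s∈Λ⊥}, and r_g the unitary of ℓ²(Λ⊥) given by (r_g a)(s) = a(g*s), one has for every f ∈ L²(A), k ∈ Λ, g ∈ G: T[T_k R_g f](ω) = e^{−2πi ω·k} r_g (T[f](g*ω)) for a.e. ω ∈ Ω. -/
open MeasureTheory

/-- The dual action of `g` on the Pontryagin dual: `(g* ξ)(x) = ξ (g • x)`. -/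
noncomputable def dualAct {A G : Type*} [CommGroup A] [TopologicalSpace A] [Group G]
    [MulDistribMulAction G A] (hc : ∀ g : G, Continuous fun x : A => g • x)
    (g : G) (ξ : PontryaginDual A) : PontryaginDual A :=
  ξ.comp ⟨MulDistribMulAction.toMonoidHom A g, hc g⟩

/-- The Fourier transform on an LCA group: `f̂ (ξ) = ∫ ⟨ξ, x⟩̄ f x dμ(x)`. -/
noncomputable def fourierLCA {A : Type*} [CommGroup A] [TopologicalSpace A]
    [MeasurableSpace A] (μ : Measure A) (f : A → ℂ) (ξ : PontryaginDual A) : ℂ :=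
  ∫ x, (starRingEnd ℂ) (ξ x : ℂ) * f x ∂μ

/-- The fiberization map `T[f](ω) = (f̂(ω + s))_{s ∈ Λ⊥}`, written multiplicatively:
the fiber of `f` at `ω` is the function `s ↦ f̂(ω * s)` on the annihilator. -/
noncomputable def fiberMap {A : Type*} [CommGroup A] [TopologicalSpace A]
    [MeasurableSpace A] (μ : Measure A) (f : A → ℂ)
    (ω : PontryaginDual A) (s : PontryaginDual A) : ℂ :=
  fourierLCA μ f (ω * s)

/-- The fiberization map intertwines translations and dilations:
`T[T_k R_g f](ω) = e^{−2πi ω·k} · r_g (T[f](g*ω))`, i.e. for every `s ∈ Λ⊥`,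
`(T[T_k R_g f](ω))(s) = ⟨ω,k⟩̄ · (T[f](g*ω))(g*s)`. -/
theorem fiberization_intertwining
    {A G : Type*} [CommGroup A] [TopologicalSpace A] [IsTopologicalGroup A]
    [LocallyCompactSpace A] [SecondCountableTopology A]
    [MeasurableSpace A] [BorelSpace A] (μ : Measure A) [μ.IsHaarMeasure]
    [Group G] [MulDistribMulAction G A] [MeasurableSpace (PontryaginDual A)]
    (hc : ∀ g : G, Continuous fun x : A => g • x)
    (hmp : ∀ g : G, MeasurePreserving (fun x : A => g • x) μ μ)
    (Λ : Subgroup A) [DiscreteTopology Λ] [CompactSpace (A ⧸ Λ)]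
    (hΛ : ∀ g : G, (fun x : A => g • x) '' (Λ : Set A) = (Λ : Set A))
    (Ω : Set (PontryaginDual A)) (hΩ : MeasurableSet Ω)
    (f : A → ℂ) (hf : Integrable f μ) (k : A) (hk : k ∈ Λ) (g : G) :
    ∀ ω ∈ Ω, ∀ s : PontryaginDual A, (∀ l ∈ Λ, s l = 1) →
      fiberMap μ (fun x => f (g⁻¹ • (x * k⁻¹))) ω s
        = (starRingEnd ℂ) (ω k : ℂ) *
            fiberMap μ f (dualAct hc g ω) (dualAct hc g s) := by

  intro ω hω s hs
  haveI : μ.IsMulRightInvariant := ⟨fun a => by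
    have := map_mul_left_eq_self μ a
    simpa [mul_comm] using this⟩
  haveI : ContinuousConstSMul G A := ⟨hc⟩
  -- the change-of-variables map
  set φ : A → A := fun x => (g • x) * k with hφ
  have hmpφ : MeasurePreserving φ μ μ :=
    (measurePreserving_mul_right μ k).comp (hmp g)
  have hemb : MeasurableEmbedding φ := by
    have : φ = (Homeomorph.trans (Homeomorph.smul g) (Homeomorph.mulRight k)) := rfl
    rw [this]
    exact (Homeomorph.trans (Homeomorph.smul g) (Homeomorph.mulRight k)).toMeasurableEquiv.measurableEmbedding
  simp only [fiberMap, fourierLCA]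
  rw [← hmpφ.integral_comp hemb]
  have hsk : ((s k : Circle) : ℂ) = 1 := by rw [hs k hk]; rfl
  have key : ∀ x : A,
      (starRingEnd ℂ) (((ω * s) (φ x) : Circle) : ℂ) * f (g⁻¹ • (φ x * k⁻¹))
        = (starRingEnd ℂ) ((ω k : Circle) : ℂ) *
          ((starRingEnd ℂ) (((dualAct hc g ω * dualAct hc g s) x : Circle) : ℂ) * f x) := by
    intro x
    have h1 : g⁻¹ • (φ x * k⁻¹) = x := by
      simp [hφ, mul_inv_cancel_right, inv_smul_smul]
    have h2 : ((ω * s) (φ x) : Circle) = ω (g • x) * ω k * (s (g • x) * s k) := by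
      show ω (φ x) * s (φ x) = _
      simp only [hφ, map_mul]
    have h3 : ((dualAct hc g ω * dualAct hc g s) x : Circle) = ω (g • x) * s (g • x) := rfl
    rw [h1, h2, h3]
    push_cast
    rw [hsk]
    simp only [map_mul, map_one, mul_one]
    ring
  simp only [key]
  rw [integral_const_mul]
end

section
/- Let A be a connected second countable LCA group, Λ a uniform lattice, G a group acting faithfully by automorphisms on A preserving Λ, and Γ = Λ ⋊ G. If there exists a measurable set P ⊆ A of finite positive Haar measure such that {γP}_{γ∈Γ} is an a.e. partition of A, then G is finite. -/
open MeasureTheory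
open scoped ENNReal NNReal

/-- Since `A ⧸ Λ` is compact and `A` is locally compact, there is a compact set `K ⊆ A`
whose `Λ`-translates cover `A`. -/
private lemma exists_compact_mulcover {A : Type*} [CommGroup A] [TopologicalSpace A]
    [IsTopologicalGroup A] [LocallyCompactSpace A] (Λ : Subgroup A) [CompactSpace (A ⧸ Λ)] :
    ∃ K : Set A, IsCompact K ∧ ∀ a : A, ∃ k : Λ, a * (k : A) ∈ K := by
  have hmk : ∀ y : A ⧸ Λ, ∃ a : A, (a : A ⧸ Λ) = y := fun y => QuotientGroup.mk_surjective y
  choose sec hsec using hmk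
  have hcpt : ∀ y : A ⧸ Λ, ∃ C : Set A, IsCompact C ∧ C ∈ nhds (sec y) :=
    fun y => exists_compact_mem_nhds (sec y)
  choose C hCc hCn using hcpt
  have hopen : ∀ y : A ⧸ Λ, IsOpen (((↑) : A → A ⧸ Λ) '' interior (C y)) :=
    fun y => QuotientGroup.isOpenMap_coe _ isOpen_interior
  have hcov : (Set.univ : Set (A ⧸ Λ)) ⊆ ⋃ y, ((↑) : A → A ⧸ Λ) '' interior (C y) := by
    intro z _
    exact Set.mem_iUnion.2 ⟨z, ⟨sec z, mem_interior_iff_mem_nhds.2 (hCn z), hsec z⟩⟩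
  obtain ⟨t, ht⟩ := isCompact_univ.elim_finite_subcover _ hopen hcov
  refine ⟨⋃ y ∈ t, C y, t.isCompact_biUnion (fun y _ => hCc y), fun a => ?_⟩
  have hmem := ht (Set.mem_univ ((a : A ⧸ Λ)))
  rw [Set.mem_iUnion₂] at hmem
  obtain ⟨y, hyt, b, hb, hba⟩ := hmem
  have hk : a⁻¹ * b ∈ Λ := (QuotientGroup.eq).1 hba.symm
  refine ⟨⟨a⁻¹ * b, hk⟩, Set.mem_biUnion hyt ?_⟩
  simpa [mul_inv_cancel_left] using interior_subset hb

/-- Let `A` be a connected second countable LCA group, `Λ` a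
uniform lattice, `G` a group acting faithfully by continuous automorphisms on `A`
preserving `Λ`, and `Γ = Λ ⋊ G` acting by `(k,g) · x = (g • x) * k`.  If there is a
measurable `P ⊆ A` of finite positive Haar measure such that `{γ P}_{γ ∈ Γ}` is an
a.e. partition of `A`, then `G` is finite. -/
theorem tiling_implies_finite_group
    {A G : Type*} [CommGroup A] [TopologicalSpace A] [IsTopologicalGroup A]
    [LocallyCompactSpace A] [SecondCountableTopology A] [ConnectedSpace A]
    [MeasurableSpace A] [BorelSpace A] (μ : Measure A) [μ.IsHaarMeasure]
    [Group G] [Countable G] [MulDistribMulAction G A] [FaithfulSMul G A]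
    (hc : ∀ g : G, Continuous fun x : A => g • x)
    (Λ : Subgroup A) [DiscreteTopology Λ] [CompactSpace (A ⧸ Λ)]
    (hΛ : ∀ g : G, (fun x : A => g • x) '' (Λ : Set A) = (Λ : Set A))
    (P : Set A) (hPm : MeasurableSet P) (hPpos : 0 < μ P) (hPfin : μ P < ⊤)
    (hcover : μ (Set.univ \ ⋃ (k : Λ) (g : G), (fun x : A => (g • x) * (k : A)) '' P) = 0)
    (hdisj : ∀ (k k' : Λ) (g g' : G), (k, g) ≠ (k', g') →
      μ (((fun x : A => (g • x) * (k : A)) '' P) ∩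
          ((fun x : A => (g' • x) * (k' : A)) '' P)) = 0) :
    Finite G := by
  classical
  -- Λ is countable (discrete subspace of a second countable space)
  haveI hΛc : Countable Λ := by
    haveI : TopologicalSpace.SeparableSpace Λ :=
      TopologicalSpace.SecondCountableTopology.to_separableSpace
    exact (TopologicalSpace.separableSpace_iff_countable).1 this
  -- each `g` acts by a homeomorphism / measurable equivalence
  let e : G → A ≃ₜ A := fun g =>
    { toFun := fun x => g • x
      invFun := fun x => g⁻¹ • x
      left_inv := fun x => inv_smul_smul g x
      right_inv := fun x => smul_inv_smul g x
      continuous_toFun := hc g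
      continuous_invFun := hc g⁻¹ }
  let F : G → A ≃ᵐ A := fun g => (e g).toMeasurableEquiv
  have hHaar : ∀ g : G, (μ.map (F g)).IsHaarMeasure := fun g =>
    (MulDistribMulAction.toMulEquiv A g).isHaarMeasure_map μ (hc g) (hc g⁻¹)
  let c : G → NNReal := fun g => Measure.haarScalarFactor (μ.map (F g)) μ
  have hmap : ∀ g : G, μ.map (F g) = c g • μ := fun g =>
    haveI := hHaar g
    Measure.isMulLeftInvariant_eq_smul (μ.map (F g)) μ
  -- the scaling property of the action of `g` on the Haar measure
  have hscale : ∀ (g : G) (s : Set A), μ ((fun x : A => g • x) ⁻¹' s) = c g * μ s := by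
    intro g s
    have h1 : (μ.map (F g)) s = μ ((fun x : A => g • x) ⁻¹' s) :=
      MeasurableEquiv.map_apply (F g) s
    rw [← h1, hmap g]
    rw [Measure.smul_apply, ENNReal.smul_def, smul_eq_mul]
  have hcc : ∀ g : G, (c g : ℝ≥0∞) * (c g⁻¹ : ℝ≥0∞) * μ P = μ P := by
    intro g
    have h2 : ((fun x : A => g • x) ⁻¹' ((fun x : A => g⁻¹ • x) ⁻¹' P)) = P := by
      ext x; simp [Set.mem_preimage, inv_smul_smul]
    have h1 := hscale g ((fun x : A => g⁻¹ • x) ⁻¹' P)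
    rw [h2, hscale g⁻¹ P] at h1
    rw [mul_assoc]; exact h1.symm
  -- the sets `S k g` are the `γ`-translates of `P`, written as preimages
  set S : Λ → G → Set A := fun k g => (fun x : A => g⁻¹ • (x * (k : A)⁻¹)) ⁻¹' P with hS
  have hSm : ∀ (k : Λ) (g : G), MeasurableSet (S k g) := fun k g =>
    (((hc g⁻¹).comp (continuous_mul_right ((k : A)⁻¹))).measurable) hPm
  have himg : ∀ (k : Λ) (g : G),
      (fun x : A => (g • x) * (k : A)) '' P = S k g := by
    intro k g
    ext y
    constructor
    · rintro ⟨x, hx, rfl⟩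
      simpa [hS, mul_inv_cancel_right, inv_smul_smul] using hx
    · intro hy
      exact ⟨g⁻¹ • (y * (k : A)⁻¹), hy, by simp [smul_inv_smul, inv_mul_cancel_right]⟩
  have hdisjS : ∀ (k k' : Λ) (g g' : G), (k, g) ≠ (k', g') →
      μ (S k g ∩ S k' g') = 0 := by
    intro k k' g g' h
    rw [← himg, ← himg]
    exact hdisj k k' g g' h
  have hTS : ∀ g : G, S 1 g = (fun x : A => g⁻¹ • x) ⁻¹' P := by
    intro g; simp [hS]
  have hm : ∀ g : G, μ (S 1 g) = c g⁻¹ * μ P := by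
    intro g; rw [hTS g]; exact hscale g⁻¹ P
  -- the dichotomy: for each g, either S 1 g or S 1 g⁻¹ has measure at least μ P
  have key : ∀ g : G, μ P ≤ μ (S 1 g) ∨ μ P ≤ μ (S 1 g⁻¹) := by
    intro g
    by_contra h
    push_neg at h
    obtain ⟨h1, h2⟩ := h
    have e1 : μ (S 1 g) * μ (S 1 g⁻¹) = μ P * μ P := by
      rw [hm g, hm g⁻¹, inv_inv]
      calc (c g⁻¹ : ℝ≥0∞) * μ P * ((c g : ℝ≥0∞) * μ P)
          = ((c g : ℝ≥0∞) * (c g⁻¹ : ℝ≥0∞) * μ P) * μ P := by ring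
        _ = μ P * μ P := by rw [hcc g]
    have lt1 : μ (S 1 g) * μ (S 1 g⁻¹) < μ P * μ P := by
      calc μ (S 1 g) * μ (S 1 g⁻¹) ≤ μ (S 1 g) * μ P := mul_le_mul_right h2.le _
        _ < μ P * μ P := ENNReal.mul_lt_mul_left (hPpos.ne') hPfin.ne h1
    exact lt1.ne e1
  -- Q is the union of the G-translates of P
  set Q : Set A := ⋃ g : G, S 1 g with hQ
  have hQm : MeasurableSet Q := MeasurableSet.iUnion (fun g => hSm 1 g)
  have hQsum : μ Q = ∑' g : G, μ (S 1 g) := by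
    refine measure_iUnion₀ ?_ (fun g => (hSm 1 g).nullMeasurableSet)
    intro g g' hgg'
    exact hdisjS 1 1 g g' (fun h => hgg' (congrArg Prod.snd h))
  -- Q has finite measure, because the Λ-translates of Q are a.e. disjoint
  -- and Λ-translates of a compact set cover A
  obtain ⟨K, hKc, hKcov⟩ := exists_compact_mulcover Λ
  set K' : Set A := toMeasurable μ K with hK'
  have hKK' : K ⊆ K' := subset_toMeasurable μ K
  have hK'm : MeasurableSet K' := measurableSet_toMeasurable μ K
  have hK'fin : μ K' < ⊤ := by
    rw [hK', measure_toMeasurable]; exact hKc.measure_lt_top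
  have hQtrans : ∀ k : Λ, (fun x : A => x * (k : A)) ⁻¹' Q = ⋃ g : G, S k⁻¹ g := by
    intro k
    rw [hQ, Set.preimage_iUnion]
    refine Set.iUnion_congr fun g => ?_
    ext x
    simp [hS]
  set W : Λ → Set A := fun k => ((fun x : A => x * (k : A)) ⁻¹' Q) ∩ K' with hW
  have hWm : ∀ k : Λ, MeasurableSet (W k) := fun k =>
    (((continuous_mul_right ((k : A))).measurable) hQm).inter hK'm
  have hWd : Pairwise (Function.onFun (AEDisjoint μ) W) := by
    intro k k' hkk'
    have hsub : W k ∩ W k' ⊆ ⋃ g : G, ⋃ g' : G, S k⁻¹ g ∩ S k'⁻¹ g' := by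
      rintro x ⟨⟨hx1, _⟩, ⟨hx2, _⟩⟩
      rw [hQtrans k] at hx1
      rw [hQtrans k'] at hx2
      obtain ⟨g, hg⟩ := Set.mem_iUnion.1 hx1
      obtain ⟨g', hg'⟩ := Set.mem_iUnion.1 hx2
      exact Set.mem_iUnion.2 ⟨g, Set.mem_iUnion.2 ⟨g', hg, hg'⟩⟩
    refine measure_mono_null hsub ?_
    refine measure_iUnion_null fun g => measure_iUnion_null fun g' => ?_
    exact hdisjS _ _ _ _ (fun h => hkk' (inv_injective (congrArg Prod.fst h)))
  have hterm : ∀ k : Λ, μ (Q ∩ (fun x : A => x * (k : A)) ⁻¹' K') = μ (W k⁻¹) := by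
    intro k
    have h0 := measure_preimage_mul_right μ ((k : A)⁻¹)
      (Q ∩ (fun x : A => x * (k : A)) ⁻¹' K')
    rw [← h0]
    congr 1
    ext x
    simp [hW, Set.mem_inter_iff, Set.mem_preimage, inv_mul_cancel_right, and_comm]
  have hQfin : μ Q < ⊤ := by
    have h1 : μ Q ≤ ∑' k : Λ, μ (Q ∩ (fun x : A => x * (k : A)) ⁻¹' K') := by
      refine le_trans (measure_mono ?_) (measure_iUnion_le _)
      intro x hx
      obtain ⟨k, hk⟩ := hKcov x
      exact Set.mem_iUnion.2 ⟨k, hx, hKK' hk⟩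
    have h2 : ∑' k : Λ, μ (Q ∩ (fun x : A => x * (k : A)) ⁻¹' K') = ∑' k : Λ, μ (W k) := by
      rw [tsum_congr hterm]
      exact (Equiv.inv Λ).tsum_eq (fun k => μ (W k))
    have h3 : ∑' k : Λ, μ (W k) = μ (⋃ k : Λ, W k) :=
      (measure_iUnion₀ hWd (fun k => (hWm k).nullMeasurableSet)).symm
    have h4 : μ (⋃ k : Λ, W k) ≤ μ K' :=
      measure_mono (Set.iUnion_subset fun k => Set.inter_subset_right)
    have : μ Q ≤ μ K' := by
      calc μ Q ≤ _ := h1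
        _ = _ := h2
        _ = _ := h3
        _ ≤ μ K' := h4
    exact lt_of_le_of_lt this hK'fin
  -- conclude: if G were infinite, infinitely many translates would have measure ≥ μ P
  by_contra hGfin
  rw [not_finite_iff_infinite] at hGfin
  set Sbig : Set G := {g : G | μ P ≤ μ (S 1 g)} with hSbig
  have hSbigInf : Sbig.Infinite := by
    by_contra hfin
    rw [Set.not_infinite] at hfin
    have huniv : (Set.univ : Set G).Finite := by
      refine Set.Finite.subset (hfin.union (hfin.image (·⁻¹))) ?_
      intro g _
      rcases key g with h | h
      · exact Or.inl h
      · exact Or.inr ⟨g⁻¹, h, inv_inv g⟩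
    exact Set.infinite_univ huniv
  haveI : Infinite Sbig := hSbigInf.to_subtype
  have htop : (⊤ : ℝ≥0∞) ≤ ∑' g : G, μ (S 1 g) := by
    have h1 : (⊤ : ℝ≥0∞) = ∑' _ : Sbig, μ P :=
      (ENNReal.tsum_const_eq_top_of_ne_zero hPpos.ne').symm
    rw [h1]
    calc ∑' _ : Sbig, μ P ≤ ∑' g : Sbig, μ (S 1 (g : G)) :=
          ENNReal.tsum_le_tsum fun g => g.2
      _ ≤ ∑' g : G, μ (S 1 g) :=
          ENNReal.tsum_comp_le_tsum_of_injective Subtype.val_injective _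
  rw [← hQsum] at htop
  exact absurd (lt_of_le_of_lt htop hQfin) (lt_irrefl ⊤)
end

section
/- Let V ⊆ L²(A) be a closed Γ-invariant subspace with range function J_V satisfying J_V(g*ω) = r_{g⁻¹}J_V(ω) for a.e. ω and all g ∈ G (G finite), let Ω₀ be a Borel section of Â/(Λ⊥ ⋊ G) with Ω = ∪_{g∈G} g*Ω₀ a Borel section of Â/Λ⊥, and let F = {f₁,…,f_m} ⊂ L²(A). Then the error functional E[V;F] = Σ_{i=1}^m ‖f_i − P_V f_i‖² satisfies E[V;F] = ∫_{Ω₀} Σ_{i=1}^m Σ_{g∈G} ‖T[R_g f_i](ω) − p_{J_V(ω)} T[R_g f_i](ω)‖²_{ℓ²(Λ⊥)} dω. -/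
open MeasureTheory

private lemma aux_pyth {K : Type*} [NormedAddCommGroup K] [InnerProductSpace ℂ K]
    (L : Submodule ℂ K) [Submodule.HasOrthogonalProjection L] (x : K) :
    ‖x - L.subtypeL (Submodule.orthogonalProjectionOnto L x)‖ ^ 2
      + ‖(L.subtypeL (Submodule.orthogonalProjectionOnto L x) : K)‖ ^ 2 = ‖x‖ ^ 2 := by
  have h := norm_add_sq_eq_norm_sq_add_norm_sq_of_inner_eq_zero
    (𝕜 := ℂ) (x - (Submodule.orthogonalProjectionOnto L x : K)) (Submodule.orthogonalProjectionOnto L x : K)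
    (Submodule.starProjection_inner_eq_zero x _ (Submodule.orthogonalProjectionOnto L x).2)
  simp only [sub_add_cancel] at h
  simpa [Submodule.subtypeL_apply, sq] using h.symm

private lemma aux_proj_map {K : Type*} [NormedAddCommGroup K] [InnerProductSpace ℂ K]
    (e : K ≃ₗᵢ[ℂ] K) (L M : Submodule ℂ K) [Submodule.HasOrthogonalProjection L]
    [Submodule.HasOrthogonalProjection M] (h : (M : Set K) = ⇑e '' (L : Set K)) (x : K) :
    (Submodule.orthogonalProjectionOnto M (e x) : K) = e (Submodule.orthogonalProjectionOnto L x) := by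
  rw [← Submodule.starProjection_apply]
  apply Submodule.eq_starProjection_of_mem_of_inner_eq_zero
  · have : (e (Submodule.orthogonalProjectionOnto L x) : K) ∈ (M : Set K) := by
      rw [h]; exact ⟨_, (Submodule.orthogonalProjectionOnto L x).2, rfl⟩
    exact this
  · intro w hw
    have hw' : w ∈ ⇑e '' (L : Set K) := by rw [← h]; exact hw
    obtain ⟨u, hu, rfl⟩ := hw'
    rw [← map_sub, LinearIsometryEquiv.inner_map_map]
    exact Submodule.starProjection_inner_eq_zero x u hu

private noncomputable def errD {K Ω : Type*} [NormedAddCommGroup K] [InnerProductSpace ℂ K]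
    (J : Ω → Submodule ℂ K) [∀ ω, Submodule.HasOrthogonalProjection (J ω)]
    (y : Ω → K) (ω : Ω) : ℝ :=
  ‖y ω - (J ω).subtypeL (Submodule.orthogonalProjectionOnto (J ω) (y ω))‖ ^ 2

private lemma aux_lemA {H₀ K Ω : Type*}
    [NormedAddCommGroup H₀] [InnerProductSpace ℂ H₀] [CompleteSpace H₀]
    [NormedAddCommGroup K] [InnerProductSpace ℂ K] [CompleteSpace K]
    [MeasurableSpace Ω] (ν : Measure Ω)
    (T : H₀ → Ω → K)
    (J : Ω → Submodule ℂ K) [∀ ω, Submodule.HasOrthogonalProjection (J ω)]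
    (V : Submodule ℂ H₀) [Submodule.HasOrthogonalProjection V]
    (hTiso : ∀ f : H₀, ‖f‖ ^ 2 = ∫ ω, ‖T f ω‖ ^ 2 ∂ν)
    (hTproj : ∀ f : H₀, ∀ᵐ ω ∂ν,
      T (V.subtypeL (Submodule.orthogonalProjectionOnto V f)) ω
        = (J ω).subtypeL (Submodule.orthogonalProjectionOnto (J ω) (T f ω)))
    (h : H₀) :
    Integrable (errD J (T h)) ν ∧
      ∫ ω, errD J (T h) ω ∂ν = ‖h - V.subtypeL (Submodule.orthogonalProjectionOnto V h)‖ ^ 2 := by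
  have hint_of_ne : ∀ x : H₀, x ≠ 0 → Integrable (fun ω => ‖T x ω‖ ^ 2) ν := by
    intro x hx
    by_contra hc
    exact hx (norm_eq_zero.1 (sq_eq_zero_iff.1 ((hTiso x).trans (integral_undef hc))))
  have hDA : ∀ ω, errD J (T h) ω
      = ‖T h ω‖ ^ 2 - ‖((J ω).subtypeL (Submodule.orthogonalProjectionOnto (J ω) (T h ω)) : K)‖ ^ 2 := by
    intro ω
    have := aux_pyth (J ω) (T h ω)
    simp only [errD]
    linarith
  have hBae : ∀ᵐ ω ∂ν,
      ‖((J ω).subtypeL (Submodule.orthogonalProjectionOnto (J ω) (T h ω)) : K)‖ ^ 2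
        = ‖T (V.subtypeL (Submodule.orthogonalProjectionOnto V h)) ω‖ ^ 2 := by
    filter_upwards [hTproj h] with ω hω
    rw [← hω]
  by_cases hV0 : V.subtypeL (Submodule.orthogonalProjectionOnto V h) = 0
  · by_cases h0 : h = 0
    · subst h0
      have hae : ∀ᵐ ω ∂ν, errD J (T 0) ω = 0 := by
        filter_upwards [hTproj 0] with ω hω
        rw [hV0] at hω
        simp only [errD, ← hω, sub_self, norm_zero]
        norm_num
      constructor
      · exact (integrable_zero _ _ _).congr (by filter_upwards [hae] with ω hh using hh.symm)
      · rw [integral_congr_ae hae, integral_zero, hV0]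
        simp
    · -- h ≠ 0 but its projection is 0
      have hAint : Integrable (fun ω => ‖T h ω‖ ^ 2) ν := hint_of_ne h h0
      have hPVh : Submodule.orthogonalProjectionOnto V h = 0 := by
        have := hV0
        rwa [Submodule.subtypeL_apply, Submodule.coe_eq_zero] at this
      set A : ℕ → Ω → ℝ := fun n ω => ‖T ((((n : ℝ) + 1)⁻¹ : ℂ) • h) ω‖ ^ 2 with hA
      have hnorm : ∀ n : ℕ, ‖((((n : ℝ) + 1)⁻¹ : ℂ) • h)‖ ^ 2
          = (((n : ℝ) + 1)⁻¹) ^ 2 * ‖h‖ ^ 2 := by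
        intro n
        rw [norm_smul, mul_pow]
        congr 1
        rw [show ((((n : ℝ) : ℂ)) + 1)⁻¹ = (((((n : ℝ) + 1)⁻¹ : ℝ)) : ℂ) by push_cast; ring]
        rw [Complex.norm_real, Real.norm_eq_abs, abs_of_nonneg (by positivity)]
      have hAval : ∀ n, ∫ ω, A n ω ∂ν = (((n : ℝ) + 1)⁻¹) ^ 2 * ‖h‖ ^ 2 := by
        intro n
        rw [← hTiso, hnorm]
      have hsmul_ne : ∀ n : ℕ, ((((n : ℝ) + 1)⁻¹ : ℂ) • h) ≠ 0 := by
        intro n hc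
        rcases smul_eq_zero.1 hc with hc' | hc'
        · have hr : (((n : ℝ) + 1)⁻¹ : ℝ) = 0 := by exact_mod_cast hc'
          have hpos : (0 : ℝ) < ((n : ℝ) + 1)⁻¹ := by positivity
          linarith
        · exact h0 hc'
      have hAint' : ∀ n, Integrable (A n) ν := fun n => hint_of_ne _ (hsmul_ne n)
      have hBle : ∀ n : ℕ, ∀ᵐ ω ∂ν,
          ‖((J ω).subtypeL (Submodule.orthogonalProjectionOnto (J ω) (T h ω)) : K)‖ ^ 2 ≤ A n ω := by
        intro n
        have h2 := hTproj ((((n : ℝ) + 1)⁻¹ : ℂ) • h)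
        filter_upwards [hTproj h, h2] with ω hω1 hω2
        rw [hV0] at hω1
        have hPsmul : V.subtypeL (Submodule.orthogonalProjectionOnto V ((((n : ℝ) + 1)⁻¹ : ℂ) • h)) = 0 := by
          rw [_root_.map_smul, hPVh]
          simp
        rw [hPsmul] at hω2
        have hp := aux_pyth (J ω) (T ((((n : ℝ) + 1)⁻¹ : ℂ) • h) ω)
        have heq : ‖((J ω).subtypeL (Submodule.orthogonalProjectionOnto (J ω) (T h ω)) : K)‖
            = ‖((J ω).subtypeL (Submodule.orthogonalProjectionOnto (J ω)
                (T ((((n : ℝ) + 1)⁻¹ : ℂ) • h) ω)) : K)‖ := by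
          rw [← hω1, ← hω2]
        rw [heq]
        simp only [hA]
        nlinarith [sq_nonneg (‖T ((((n : ℝ) + 1)⁻¹ : ℂ) • h) ω
          - (J ω).subtypeL (Submodule.orthogonalProjectionOnto (J ω)
              (T ((((n : ℝ) + 1)⁻¹ : ℂ) • h) ω))‖)]
      set Ainf : Ω → ℝ := fun ω => ⨅ n : ℕ, A n ω with hAinf
      have hAnonneg : ∀ n ω, 0 ≤ A n ω := fun n ω => sq_nonneg _
      have hAinf_nonneg : ∀ ω, 0 ≤ Ainf ω := fun ω => Real.iInf_nonneg (fun n => hAnonneg n ω)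
      have hbdd : ∀ ω, BddBelow (Set.range fun n => A n ω) := by
        intro ω
        exact ⟨0, by rintro x ⟨n, rfl⟩; exact hAnonneg n ω⟩
      have hAinf_le : ∀ n ω, Ainf ω ≤ A n ω := fun n ω => ciInf_le (hbdd ω) n
      have hAinfm : AEStronglyMeasurable Ainf ν :=
        (AEMeasurable.iInf (fun n => (hAint' n).aemeasurable)).aestronglyMeasurable
      have hAinf_int : Integrable Ainf ν := by
        refine (hAint' 0).mono' hAinfm (Filter.Eventually.of_forall fun ω => ?_)
        rw [Real.norm_eq_abs, abs_of_nonneg (hAinf_nonneg ω)]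
        exact hAinf_le 0 ω
      have hAinf_zero : ∫ ω, Ainf ω ∂ν = 0 := by
        have hge : 0 ≤ ∫ ω, Ainf ω ∂ν := integral_nonneg hAinf_nonneg
        have hle : ∫ ω, Ainf ω ∂ν ≤ 0 := by
          have ht : Filter.Tendsto (fun n : ℕ => (((n : ℝ) + 1)⁻¹) ^ 2 * ‖h‖ ^ 2)
              Filter.atTop (nhds 0) := by
            have t1 : Filter.Tendsto (fun n : ℕ => ((n : ℝ) + 1)⁻¹)
                Filter.atTop (nhds 0) := by
              simpa [one_div] using tendsto_one_div_add_atTop_nhds_zero_nat (𝕜 := ℝ)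
            have := (t1.pow 2).mul_const (‖h‖ ^ 2)
            simpa using this
          refine ge_of_tendsto' ht fun n => ?_
          rw [← hAval n]
          exact integral_mono hAinf_int (hAint' n) (fun ω => hAinf_le n ω)
        linarith
      have hAinf0 : ∀ᵐ ω ∂ν, Ainf ω = 0 :=
        (integral_eq_zero_iff_of_nonneg_ae
          (Filter.Eventually.of_forall hAinf_nonneg) hAinf_int).1 hAinf_zero
      have hB0 : ∀ᵐ ω ∂ν,
          ‖((J ω).subtypeL (Submodule.orthogonalProjectionOnto (J ω) (T h ω)) : K)‖ ^ 2 = 0 := by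
        have hall : ∀ᵐ ω ∂ν, ∀ n : ℕ,
            ‖((J ω).subtypeL (Submodule.orthogonalProjectionOnto (J ω) (T h ω)) : K)‖ ^ 2 ≤ A n ω :=
          (ae_all_iff).2 hBle
        filter_upwards [hAinf0, hall] with ω h1 h2
        have hle' : ‖((J ω).subtypeL (Submodule.orthogonalProjectionOnto (J ω) (T h ω)) : K)‖ ^ 2 ≤ Ainf ω :=
          le_ciInf h2
        exact le_antisymm (hle'.trans h1.le) (sq_nonneg _)
      have hDae : ∀ᵐ ω ∂ν, errD J (T h) ω = ‖T h ω‖ ^ 2 := by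
        filter_upwards [hB0] with ω hω
        rw [hDA ω, hω, sub_zero]
      constructor
      · exact hAint.congr (by filter_upwards [hDae] with ω hh using hh.symm)
      · rw [integral_congr_ae hDae, ← hTiso h, hV0, sub_zero]
  · -- the projection is nonzero
    have h0 : h ≠ 0 := by
      rintro rfl
      exact hV0 (by simp)
    have hAint : Integrable (fun ω => ‖T h ω‖ ^ 2) ν := hint_of_ne h h0
    have hBint : Integrable
        (fun ω => ‖T (V.subtypeL (Submodule.orthogonalProjectionOnto V h)) ω‖ ^ 2) ν :=
      hint_of_ne _ hV0
    have hDae : ∀ᵐ ω ∂ν, errD J (T h) ω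
        = ‖T h ω‖ ^ 2 - ‖T (V.subtypeL (Submodule.orthogonalProjectionOnto V h)) ω‖ ^ 2 := by
      filter_upwards [hBae] with ω hω
      rw [hDA ω, hω]
    refine ⟨(hAint.sub hBint).congr (by filter_upwards [hDae] with ω hh using hh.symm), ?_⟩
    rw [integral_congr_ae hDae, integral_sub hAint hBint, ← hTiso h, ← hTiso]
    have hp := aux_pyth V h
    linarith

/-- Let `V ⊆ L²(A)` be a closed `Γ`-invariant subspace whose range
function `J` satisfies the covariance `J(g*ω) = r_{g⁻¹} J(ω)` a.e. (`G` finite), let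
`Ω₀` be a Borel section of `Â/(Λ⊥ ⋊ G)`, so that `Ω` is the a.e.-disjoint union of
the sets `g*Ω₀`, and let `F = {f₁,…,f_m} ⊂ L²(A)`.  Then the error functional
`E[V;F] = Σ_i ‖f_i − P_V f_i‖²` satisfies
`E[V;F] = ∫_{Ω₀} Σ_i Σ_g ‖T[R_g f_i](ω) − p_{J(ω)} T[R_g f_i](ω)‖² dω`. -/
theorem error_functional_fiberization
    {H₀ K Ω G : Type*}
    [NormedAddCommGroup H₀] [InnerProductSpace ℂ H₀] [CompleteSpace H₀]
    [NormedAddCommGroup K] [InnerProductSpace ℂ K] [CompleteSpace K]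
    [MeasurableSpace Ω] (ν : Measure Ω) [Group G] [Fintype G] {m : ℕ}
    (T : H₀ → Ω → K) (R : G → H₀ → H₀)
    (r : G → (K ≃ₗᵢ[ℂ] K))
    (hr1 : ∀ x : K, r 1 x = x)
    (hrmul : ∀ (g₁ g₂ : G) (x : K), r (g₁ * g₂) x = r g₁ (r g₂ x))
    (σ : G → Ω → Ω)
    (hσmp : ∀ g : G, MeasurePreserving (σ g) ν ν)
    (hσemb : ∀ g : G, MeasurableEmbedding (σ g))
    (Ω₀ : Set Ω) (hΩ₀ : MeasurableSet Ω₀)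
    (hcover : ν (Set.univ \ ⋃ g : G, σ g '' Ω₀) = 0)
    (hdisj : ∀ g g' : G, g ≠ g' → ν (σ g '' Ω₀ ∩ σ g' '' Ω₀) = 0)
    (J : Ω → Submodule ℂ K) [∀ ω, Submodule.HasOrthogonalProjection (J ω)]
    (V : Submodule ℂ H₀) [Submodule.HasOrthogonalProjection V]
    (hRinv : ∀ g : G, ∀ x ∈ V, R g x ∈ V)
    (hRiso : ∀ (g : G) (x : H₀), ‖R g x‖ = ‖x‖)
    (hTiso : ∀ f : H₀, ‖f‖ ^ 2 = ∫ ω, ‖T f ω‖ ^ 2 ∂ν)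
    (hTproj : ∀ f : H₀, ∀ᵐ ω ∂ν,
      T (V.subtypeL (Submodule.orthogonalProjectionOnto V f)) ω
        = (J ω).subtypeL (Submodule.orthogonalProjectionOnto (J ω) (T f ω)))
    (hinter : ∀ (g : G) (f : H₀), ∀ᵐ ω ∂ν, T (R g f) ω = r g (T f (σ g ω)))
    (hJcov : ∀ g : G, ∀ᵐ ω ∂ν, ((J (σ g ω)) : Set K) = (⇑(r g⁻¹)) '' ((J ω) : Set K))
    (f : Fin m → H₀) :
    ∑ i, ‖f i - V.subtypeL (Submodule.orthogonalProjectionOnto V (f i))‖ ^ 2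
      = ∫ ω in Ω₀, ∑ i, ∑ g : G,
          ‖T (R g (f i)) ω - (J ω).subtypeL (Submodule.orthogonalProjectionOnto (J ω) (T (R g (f i)) ω))‖ ^ 2 ∂ν := by
  classical
  have hD : ∀ h : H₀, Integrable (errD J (T h)) ν ∧
      ∫ ω, errD J (T h) ω ∂ν = ‖h - V.subtypeL (Submodule.orthogonalProjectionOnto V h)‖ ^ 2 :=
    fun h => aux_lemA ν T J V hTiso hTproj h
  -- change of variables at the level of fibers
  have lemB : ∀ (g : G) (h : H₀), ∀ᵐ ω ∂ν,
      errD J (T (R g h)) ω = errD J (T h) (σ g ω) := by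
    intro g h
    filter_upwards [hinter g h, hJcov g] with ω h1 h2
    have hid : ∀ x : K, r g (r g⁻¹ x) = x := by
      intro x
      rw [← hrmul, mul_inv_cancel, hr1]
    have hset : ((J ω) : Set K) = ⇑(r g) '' ((J (σ g ω)) : Set K) := by
      rw [h2, ← Set.image_comp]
      rw [show (⇑(r g) ∘ ⇑(r g⁻¹)) = id from funext hid, Set.image_id]
    have hp := aux_proj_map (r g) (J (σ g ω)) (J ω) hset (T h (σ g ω))
    simp only [errD, h1, Submodule.subtypeL_apply]
    rw [hp, ← map_sub, LinearIsometryEquiv.norm_map]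
  -- integrability of the composed error on Ω₀
  have hcomp : ∀ (g : G) (h : H₀), Integrable (fun ω => errD J (T h) (σ g ω)) ν := by
    intro g h
    have h1 : Integrable (errD J (T h)) (Measure.map (σ g) ν) := by
      rw [(hσmp g).map_eq]; exact (hD h).1
    exact ((hσemb g).integrable_map_iff).1 h1
  have hIO : ∀ (g : G) (i : Fin m), IntegrableOn (errD J (T (R g (f i)))) Ω₀ ν := by
    intro g i
    have hae : (fun ω => errD J (T (f i)) (σ g ω)) =ᵐ[ν.restrict Ω₀]
        (errD J (T (R g (f i)))) :=
      ae_restrict_of_ae ((lemB g (f i)).mono fun ω hω => hω.symm)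
    exact ((hcomp g (f i)).integrableOn).congr hae
  -- the per-g set integral over Ω₀ equals a set integral over σ g '' Ω₀
  have hg : ∀ (i : Fin m) (g : G),
      ∫ ω in Ω₀, errD J (T (R g (f i))) ω ∂ν
        = ∫ ω in σ g '' Ω₀, errD J (T (f i)) ω ∂ν := by
    intro i g
    have step1 : ∫ ω in Ω₀, errD J (T (R g (f i))) ω ∂ν
        = ∫ ω in Ω₀, errD J (T (f i)) (σ g ω) ∂ν :=
      integral_congr_ae (ae_restrict_of_ae (lemB g (f i)))
    have step2 : ∫ ω in σ g '' Ω₀, errD J (T (f i)) ω ∂ν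
        = ∫ ω in Ω₀, errD J (T (f i)) (σ g ω) ∂ν := by
      conv_lhs => rw [← (hσmp g).map_eq]
      rw [(hσemb g).setIntegral_map]
      rw [(hσemb g).injective.preimage_image]
    rw [step1, step2]
  -- main computation
  have hRHS : ∫ ω in Ω₀, ∑ i, ∑ g : G, errD J (T (R g (f i))) ω ∂ν
      = ∑ i, ∑ g : G, ∫ ω in Ω₀, errD J (T (R g (f i))) ω ∂ν := by
    rw [integral_finset_sum _ (fun i _ => integrable_finset_sum _ (fun g _ => hIO g i))]
    exact Finset.sum_congr rfl fun i _ => integral_finset_sum _ (fun g _ => hIO g i)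
  show ∑ i, ‖f i - V.subtypeL (Submodule.orthogonalProjectionOnto V (f i))‖ ^ 2
      = ∫ ω in Ω₀, ∑ i, ∑ g : G, errD J (T (R g (f i))) ω ∂ν
  rw [hRHS]
  refine Finset.sum_congr rfl fun i _ => ?_
  have hunion : ∫ ω in ⋃ g : G, σ g '' Ω₀, errD J (T (f i)) ω ∂ν
      = ∑' g : G, ∫ ω in σ g '' Ω₀, errD J (T (f i)) ω ∂ν :=
    integral_iUnion_ae (fun g => ((hσemb g).measurableSet_image' hΩ₀).nullMeasurableSet)
      (fun g g' hgg' => hdisj g g' hgg') ((hD (f i)).1.integrableOn)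
  have huniv : ∫ ω in ⋃ g : G, σ g '' Ω₀, errD J (T (f i)) ω ∂ν
      = ∫ ω, errD J (T (f i)) ω ∂ν := by
    rw [setIntegral_congr_set (show (⋃ g : G, σ g '' Ω₀) =ᵐ[ν] Set.univ by
      rw [ae_eq_univ, Set.compl_eq_univ_diff]; exact hcover)]
    exact setIntegral_univ
  calc ‖f i - V.subtypeL (Submodule.orthogonalProjectionOnto V (f i))‖ ^ 2
      = ∫ ω, errD J (T (f i)) ω ∂ν := ((hD (f i)).2).symm
    _ = ∑' g : G, ∫ ω in σ g '' Ω₀, errD J (T (f i)) ω ∂ν := by rw [← hunion, huniv]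
    _ = ∑ g : G, ∫ ω in σ g '' Ω₀, errD J (T (f i)) ω ∂ν := tsum_fintype _
    _ = ∑ g : G, ∫ ω in Ω₀, errD J (T (R g (f i))) ω ∂ν :=
        Finset.sum_congr rfl fun g _ => (hg i g).symm
end
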